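/- arXiv:1903.06358 — 2 statements merged into one kernel-verified Lean document; each statement's English description precedes it below -/
import Mathlib

section
/- Let H be a finite dimensional Hopf algebra, A an H-module algebra with comodule structure ρ : A → A ⊗ H*, and suppose there exist a₁,…,aₙ ∈ A such that ρ(a₁),…,ρ(aₙ) form a basis of the left A-submodule M = (A ⊗ 1)ρ(A) of A ⊗ H* over A ⊗ 1. Then a₁,…,aₙ form a basis of A as a left module over A^H; in particular A is a free left A^H-module of rank n. -/
set_option maxHeartbeats 1000000
set_option synthInstance.maxHeartbeats 200000


open TensorProduct

variable {k : Type*} [Field k]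
variable {K : Type*} [Ring K] [HopfAlgebra k K] [FiniteDimensional k K]
variable {A : Type*} [Ring A] [Algebra k A]

/-- `ρ` makes `A` into a (right) `K`-comodule algebra; for `K = H*` the dual of a finite
dimensional Hopf algebra `H`, this is the same thing as an `H`-module algebra structure,
with `ρ(a)(h) = ha` under `A ⊗ H* ≅ Hom(H, A)`. -/
structure IsComoduleAlgebra (ρ : A →ₐ[k] A ⊗[k] K) : Prop where
  coassoc : ∀ a : A,
    (TensorProduct.assoc k A K K) ((TensorProduct.map ρ.toLinearMap LinearMap.id) (ρ a)) =
      (TensorProduct.map LinearMap.id (Coalgebra.comul (R := k) (A := K))) (ρ a)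
  counit_id : ∀ a : A,
    (TensorProduct.rid k A)
      ((TensorProduct.map LinearMap.id (Coalgebra.counit (R := k) (A := K))) (ρ a)) = a

/-- The subalgebra of coinvariants `A^{co K}`; for `K = H*` this is the invariant
subalgebra `A^H`. -/
def coinvariants (ρ : A →ₐ[k] A ⊗[k] K) : Subalgebra k A where
  carrier := {a | ρ a = a ⊗ₜ[k] 1}
  one_mem' := by
    simp only [Set.mem_setOf_eq, map_one, Algebra.TensorProduct.one_def]
  mul_mem' := by
    intro a b ha hb
    simp only [Set.mem_setOf_eq] at ha hb ⊢
    rw [map_mul, ha, hb, Algebra.TensorProduct.tmul_mul_tmul, mul_one]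
  add_mem' := by
    intro a b ha hb
    simp only [Set.mem_setOf_eq] at ha hb ⊢
    rw [map_add, ha, hb, TensorProduct.add_tmul]
  algebraMap_mem' := by
    intro r
    show ρ (algebraMap k A r) = (algebraMap k A r) ⊗ₜ[k] 1
    rw [AlgHom.commutes, Algebra.TensorProduct.algebraMap_apply]

/-- The `k`-linear "Galois" map `β : A ⊗[k] A → A ⊗ K`, `a ⊗ b ↦ (a ⊗ 1)·ρ(b)`. -/
noncomputable def galoisMap (ρ : A →ₐ[k] A ⊗[k] K) : A ⊗[k] A →ₗ[k] A ⊗[k] K :=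
  TensorProduct.lift
    (LinearMap.mk₂ k (fun a b => (a ⊗ₜ[k] (1 : K)) * ρ b)
      (fun a a' b => by simp [TensorProduct.add_tmul, add_mul])
      (fun c a b => by (try simp only []); rw [show (c • a) ⊗ₜ[k] (1 : K) = c • (a ⊗ₜ[k] (1 : K)) from TensorProduct.smul_tmul' c a 1, smul_mul_assoc])
      (fun a b b' => by simp [mul_add])
      (fun c a b => by simp [mul_smul_comm]))

/-- The submodule of `A ⊗[k] A` of relations defining `A ⊗_{A^H} A` as a quotient of
`A ⊗[k] A`. -/
def balancedRelations (ρ : A →ₐ[k] A ⊗[k] K) : Submodule k (A ⊗[k] A) :=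
  Submodule.span k {x : A ⊗[k] A | ∃ a b c : A, c ∈ coinvariants ρ ∧
    x = (a * c) ⊗ₜ[k] b - a ⊗ₜ[k] (c * b)}

section Aux

/-- `h ⊗ u ↦ h * S(u)`. -/
noncomputable def auxS : K ⊗[k] K →ₗ[k] K :=
  LinearMap.mul' k K ∘ₗ (HopfAlgebra.antipode (R := k) (A := K)).lTensor K

/-- `h ⊗ g ↦ ∑ h S(g₍₁₎) ⊗ g₍₂₎`. -/
noncomputable def auxQ : K ⊗[k] K →ₗ[k] K ⊗[k] K :=
  (auxS (k := k)).rTensor K ∘ₗ (TensorProduct.assoc k K K K).symm.toLinearMap ∘ₗ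
    (Coalgebra.comul (R := k) (A := K)).lTensor K

lemma auxQ_comul (g : K) :
    auxQ (k := k) (Coalgebra.comul g) = (1 : K) ⊗ₜ[k] g := by
  have hco := LinearMap.congr_fun (Coalgebra.coassoc (R := k) (A := K)) g
  simp only [LinearMap.comp_apply, LinearEquiv.coe_coe] at hco
  unfold auxQ
  simp only [LinearMap.comp_apply, LinearEquiv.coe_coe]
  rw [← hco, LinearEquiv.symm_apply_apply, ← LinearMap.rTensor_comp_apply]
  have hS : auxS (k := k) ∘ₗ (Coalgebra.comul (R := k) (A := K)) =
      Algebra.linearMap k K ∘ₗ Coalgebra.counit := by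
    unfold auxS
    rw [LinearMap.comp_assoc]
    exact HopfAlgebra.mul_antipode_lTensor_comul
  rw [hS, LinearMap.rTensor_comp, LinearMap.comp_apply]
  have hcu := LinearMap.congr_fun (Coalgebra.rTensor_counit_comp_comul (R := k) (A := K)) g
  simp only [LinearMap.comp_apply] at hcu
  rw [hcu]
  simp [TensorProduct.mk_apply, LinearMap.rTensor_tmul]

lemma auxQ_mul_left (m : K) (t : K ⊗[k] K) :
    auxQ (k := k) ((m ⊗ₜ[k] (1 : K)) * t) = (m ⊗ₜ[k] (1 : K)) * auxQ (k := k) t := by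
  induction t using TensorProduct.induction_on with
  | zero => simp
  | add x y hx hy => simp only [mul_add, map_add, hx, hy]
  | tmul h g =>
    rw [Algebra.TensorProduct.tmul_mul_tmul, one_mul]
    unfold auxQ
    simp only [LinearMap.comp_apply, LinearEquiv.coe_coe, LinearMap.lTensor_tmul]
    induction Coalgebra.comul (R := k) g using TensorProduct.induction_on with
    | zero => simp
    | add x y hx hy => simp only [TensorProduct.tmul_add, map_add, mul_add, hx, hy]
    | tmul u v =>
      rw [TensorProduct.assoc_symm_tmul, TensorProduct.assoc_symm_tmul,
        LinearMap.rTensor_tmul, LinearMap.rTensor_tmul, Algebra.TensorProduct.tmul_mul_tmul,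
        one_mul]
      unfold auxS
      simp only [LinearMap.comp_apply, LinearMap.lTensor_tmul, LinearMap.mul'_apply]
      rw [mul_assoc]

variable (ρ : A →ₐ[k] A ⊗[k] K)

lemma auxM1 (c : A) (x : A ⊗[k] K) :
    TensorProduct.map ρ.toLinearMap LinearMap.id ((c ⊗ₜ[k] (1 : K)) * x) =
      ((ρ c) ⊗ₜ[k] (1 : K)) * TensorProduct.map ρ.toLinearMap LinearMap.id x := by
  induction x using TensorProduct.induction_on with
  | zero => simp
  | add x y hx hy => simp only [mul_add, map_add, hx, hy]
  | tmul a g =>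
    rw [Algebra.TensorProduct.tmul_mul_tmul, one_mul, TensorProduct.map_tmul,
      TensorProduct.map_tmul, Algebra.TensorProduct.tmul_mul_tmul, one_mul]
    simp [map_mul]

lemma auxM2 (w : A) (m : K) (y : (A ⊗[k] K) ⊗[k] K) :
    (TensorProduct.assoc k A K K) (((w ⊗ₜ[k] m) ⊗ₜ[k] (1 : K)) * y) =
      (w ⊗ₜ[k] (m ⊗ₜ[k] (1 : K))) * (TensorProduct.assoc k A K K) y := by
  induction y using TensorProduct.induction_on with
  | zero => simp
  | add x y hx hy => simp only [mul_add, map_add, hx, hy]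
  | tmul x g =>
    induction x using TensorProduct.induction_on with
    | zero => simp
    | add x y hx hy =>
      simp only [TensorProduct.add_tmul, mul_add, map_add, hx, hy]
    | tmul p q =>
      rw [Algebra.TensorProduct.tmul_mul_tmul, Algebra.TensorProduct.tmul_mul_tmul, one_mul,
        TensorProduct.assoc_tmul, TensorProduct.assoc_tmul,
        Algebra.TensorProduct.tmul_mul_tmul, Algebra.TensorProduct.tmul_mul_tmul, one_mul]

lemma auxM3 (c : A) (x : A ⊗[k] K) :
    TensorProduct.map LinearMap.id (Coalgebra.comul (R := k) (A := K)) ((c ⊗ₜ[k] (1 : K)) * x) =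
      (c ⊗ₜ[k] ((1 : K) ⊗ₜ[k] (1 : K))) *
        TensorProduct.map LinearMap.id (Coalgebra.comul (R := k) (A := K)) x := by
  induction x using TensorProduct.induction_on with
  | zero => simp
  | add x y hx hy => simp only [mul_add, map_add, hx, hy]
  | tmul a g =>
    rw [Algebra.TensorProduct.tmul_mul_tmul, one_mul, TensorProduct.map_tmul,
      TensorProduct.map_tmul, ← Algebra.TensorProduct.one_def,
      Algebra.TensorProduct.tmul_mul_tmul, one_mul]
    simp

lemma auxB (w : A) (m : K) (y : A ⊗[k] (K ⊗[k] K)) :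
    TensorProduct.map LinearMap.id (auxQ (k := k)) ((w ⊗ₜ[k] (m ⊗ₜ[k] (1 : K))) * y) =
      (w ⊗ₜ[k] (m ⊗ₜ[k] (1 : K))) * TensorProduct.map LinearMap.id (auxQ (k := k)) y := by
  induction y using TensorProduct.induction_on with
  | zero => simp
  | add x y hx hy => simp only [mul_add, map_add, hx, hy]
  | tmul a t =>
    rw [Algebra.TensorProduct.tmul_mul_tmul, TensorProduct.map_tmul, TensorProduct.map_tmul,
      Algebra.TensorProduct.tmul_mul_tmul]
    simp [auxQ_mul_left]

lemma auxC (x : A ⊗[k] K) :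
    TensorProduct.map LinearMap.id (auxQ (k := k))
        (TensorProduct.map LinearMap.id (Coalgebra.comul (R := k) (A := K)) x) =
      TensorProduct.map LinearMap.id ((TensorProduct.mk k K K) 1) x := by
  induction x using TensorProduct.induction_on with
  | zero => simp
  | add x y hx hy => simp only [map_add, hx, hy]
  | tmul a g => simp [auxQ_comul, TensorProduct.mk_apply]

lemma auxE (w : A) (m : K) (x : A ⊗[k] K) :
    (w ⊗ₜ[k] (m ⊗ₜ[k] (1 : K))) * TensorProduct.map LinearMap.id ((TensorProduct.mk k K K) 1) x =
      TensorProduct.map LinearMap.id ((TensorProduct.mk k K K) m) ((w ⊗ₜ[k] (1 : K)) * x) := by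
  induction x using TensorProduct.induction_on with
  | zero => simp
  | add x y hx hy => simp only [map_add, mul_add, hx, hy]
  | tmul a g =>
    rw [TensorProduct.map_tmul, Algebra.TensorProduct.tmul_mul_tmul,
      Algebra.TensorProduct.tmul_mul_tmul, one_mul, TensorProduct.mk_apply,
      Algebra.TensorProduct.tmul_mul_tmul, mul_one, TensorProduct.map_tmul,
      TensorProduct.mk_apply]
    simp

/-- `h ⊗ g ↦ φ(h) • g`. -/
noncomputable def auxR (φ : K →ₗ[k] k) : K ⊗[k] K →ₗ[k] K :=
  (TensorProduct.lid k K).toLinearMap ∘ₗ TensorProduct.map φ LinearMap.id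

lemma auxF (φ : K →ₗ[k] k) (m : K) (x : A ⊗[k] K) :
    TensorProduct.map LinearMap.id (auxR (k := k) φ)
        (TensorProduct.map LinearMap.id ((TensorProduct.mk k K K) m) x) = φ m • x := by
  induction x using TensorProduct.induction_on with
  | zero => simp
  | add x y hx hy => simp only [map_add, smul_add, hx, hy]
  | tmul a g =>
    rw [TensorProduct.map_tmul, TensorProduct.mk_apply, TensorProduct.map_tmul]
    unfold auxR
    simp only [LinearMap.id_coe, id_eq, LinearMap.comp_apply, LinearEquiv.coe_coe,
      TensorProduct.map_tmul, TensorProduct.lid_tmul]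
    rw [TensorProduct.tmul_smul]

lemma auxRecon {ι : Type*} [Fintype ι] (e : Module.Basis ι k K) (x : A ⊗[k] K) :
    x = ∑ m, ((TensorProduct.rid k A)
      (TensorProduct.map LinearMap.id (e.coord m) x)) ⊗ₜ[k] e m := by
  induction x using TensorProduct.induction_on with
  | zero => simp
  | add x y hx hy =>
    simp only [map_add, TensorProduct.add_tmul, Finset.sum_add_distrib, ← hx, ← hy]
  | tmul a g =>
    simp only [TensorProduct.map_tmul, LinearMap.id_coe, id_eq, TensorProduct.rid_tmul]
    calc a ⊗ₜ[k] g = a ⊗ₜ[k] (∑ m, e.repr g m • e m) := by rw [e.sum_repr g]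
      _ = ∑ m, (e.coord m g • a) ⊗ₜ[k] e m := by
          rw [TensorProduct.tmul_sum]
          exact Finset.sum_congr rfl fun m _ => by
            rw [← TensorProduct.smul_tmul, Module.Basis.coord_apply]

lemma auxCounit (c : A) (x : A ⊗[k] K) :
    (TensorProduct.rid k A)
        (TensorProduct.map LinearMap.id (Coalgebra.counit (R := k) (A := K))
          ((c ⊗ₜ[k] (1 : K)) * x)) =
      c * (TensorProduct.rid k A)
        (TensorProduct.map LinearMap.id (Coalgebra.counit (R := k) (A := K)) x) := by
  induction x using TensorProduct.induction_on with
  | zero => simp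
  | add x y hx hy => simp only [mul_add, map_add, hx, hy]
  | tmul a g =>
    rw [Algebra.TensorProduct.tmul_mul_tmul, one_mul, TensorProduct.map_tmul,
      TensorProduct.map_tmul, TensorProduct.rid_tmul, TensorProduct.rid_tmul]
    simp [mul_smul_comm]

end Aux

/-- let `H` be a finite dimensional Hopf algebra and `A` an `H`-module
algebra (a `K`-comodule algebra for `K = H*`).  If `a₁, …, aₙ ∈ A` are such that
`ρ(a₁), …, ρ(aₙ)` form a basis over `A ⊗ 1` of the left `A`-submodule
`M = (A ⊗ 1)ρ(A)` of `A ⊗ K` (they are left `A`-independent and `A`-span `ρ(A)`), then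
`a₁, …, aₙ` form a basis of `A` as a left `A^H`-module: every `b ∈ A` is uniquely a
left `A^H`-combination of the `aᵢ`.  In particular `A` is a free left `A^H`-module of
rank `n`. -/
theorem basis_over_invariants_of_basis_of_M
    (ρ : A →ₐ[k] A ⊗[k] K) (hco : IsComoduleAlgebra ρ)
    (n : ℕ) (a : Fin n → A)
    (hspan : ∀ b : A, ∃ c : Fin n → A,
      ρ b = ∑ i, ((c i) ⊗ₜ[k] (1 : K)) * ρ (a i))
    (hindep : ∀ c : Fin n → A,
      (∑ i, ((c i) ⊗ₜ[k] (1 : K)) * ρ (a i)) = 0 → c = 0) :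
    ∀ b : A, ∃! c : Fin n → A,
      (∀ i, c i ∈ coinvariants ρ) ∧ b = ∑ i, c i * a i := by
  intro b
  obtain ⟨c, hc⟩ := hspan b
  have hsum : b = ∑ i, c i * a i := by
    conv_lhs => rw [← hco.counit_id b, hc]
    rw [map_sum, map_sum]
    exact Finset.sum_congr rfl fun i _ => by rw [auxCounit (k := k) (c i) (ρ (a i)), hco.counit_id]
  -- coinvariance of the coefficients
  have hcoinv : ∀ i, ρ (c i) = c i ⊗ₜ[k] (1 : K) := by
    set e := Module.finBasis k K with he
    set d : Fin n → Fin (Module.finrank k K) → A := fun i m =>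
      (TensorProduct.rid k A)
        (TensorProduct.map LinearMap.id (e.coord m) (ρ (c i) - (c i) ⊗ₜ[k] (1 : K))) with hd
    have hw : ∀ i, ρ (c i) - (c i) ⊗ₜ[k] (1 : K) = ∑ m, d i m ⊗ₜ[k] e m := fun i =>
      auxRecon e (ρ (c i) - (c i) ⊗ₜ[k] (1 : K))
    -- the coassociativity relation
    have key : ∑ i, ∑ m, (d i m ⊗ₜ[k] (e m ⊗ₜ[k] (1 : K))) *
        TensorProduct.map LinearMap.id (Coalgebra.comul (R := k) (A := K)) (ρ (a i)) = 0 := by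
      have E1 : TensorProduct.map LinearMap.id (Coalgebra.comul (R := k) (A := K)) (ρ b) =
          ∑ i, (c i ⊗ₜ[k] ((1 : K) ⊗ₜ[k] (1 : K))) *
            TensorProduct.map LinearMap.id (Coalgebra.comul (R := k) (A := K)) (ρ (a i)) := by
        rw [hc, map_sum]
        exact Finset.sum_congr rfl fun i _ => auxM3 (k := k) (c i) (ρ (a i))
      have E2 : TensorProduct.map LinearMap.id (Coalgebra.comul (R := k) (A := K)) (ρ b) =
          ∑ i, (TensorProduct.assoc k A K K)
            ((ρ (c i) ⊗ₜ[k] (1 : K)) *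
              TensorProduct.map ρ.toLinearMap LinearMap.id (ρ (a i))) := by
        rw [← hco.coassoc b, hc, map_sum, map_sum]
        exact Finset.sum_congr rfl fun i _ => by rw [auxM1 ρ (c i) (ρ (a i))]
      have E3 : ∀ i, (TensorProduct.assoc k A K K)
          ((ρ (c i) ⊗ₜ[k] (1 : K)) *
            TensorProduct.map ρ.toLinearMap LinearMap.id (ρ (a i))) =
          (∑ m, (d i m ⊗ₜ[k] (e m ⊗ₜ[k] (1 : K))) *
            TensorProduct.map LinearMap.id (Coalgebra.comul (R := k) (A := K)) (ρ (a i))) +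
          (c i ⊗ₜ[k] ((1 : K) ⊗ₜ[k] (1 : K))) *
            TensorProduct.map LinearMap.id (Coalgebra.comul (R := k) (A := K)) (ρ (a i)) := by
        intro i
        have hrc : ρ (c i) = (∑ m, d i m ⊗ₜ[k] e m) + (c i) ⊗ₜ[k] (1 : K) := by
          rw [← hw i]; abel
        rw [hrc, TensorProduct.add_tmul, add_mul, map_add, TensorProduct.sum_tmul,
          Finset.sum_mul, map_sum]
        congr 1
        · exact Finset.sum_congr rfl fun m _ => by
            rw [auxM2 (k := k) (d i m) (e m), hco.coassoc (a i)]
        · rw [auxM2 (k := k) (c i) (1 : K), hco.coassoc (a i)]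
      have h4 := E1.symm.trans E2
      rw [Finset.sum_congr rfl fun i _ => E3 i, Finset.sum_add_distrib] at h4
      exact right_eq_add.mp h4
    -- apply `id ⊗ Q` and reorganize
    have key2 : ∑ m, TensorProduct.map LinearMap.id ((TensorProduct.mk k K K) (e m))
        (∑ i, (d i m ⊗ₜ[k] (1 : K)) * ρ (a i)) = 0 := by
      have h1 := congrArg (TensorProduct.map LinearMap.id (auxQ (k := k))) key
      rw [map_zero, map_sum] at h1
      have h2 : ∀ i, TensorProduct.map LinearMap.id (auxQ (k := k))
          (∑ m, (d i m ⊗ₜ[k] (e m ⊗ₜ[k] (1 : K))) *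
            TensorProduct.map LinearMap.id (Coalgebra.comul (R := k) (A := K)) (ρ (a i))) =
          ∑ m, TensorProduct.map LinearMap.id ((TensorProduct.mk k K K) (e m))
            ((d i m ⊗ₜ[k] (1 : K)) * ρ (a i)) := by
        intro i
        rw [map_sum]
        exact Finset.sum_congr rfl fun m _ => by
          rw [auxB (k := k) (d i m) (e m), auxC, auxE]
      rw [Finset.sum_congr rfl fun i _ => h2 i, Finset.sum_comm] at h1
      rw [← h1]
      exact Finset.sum_congr rfl fun m _ => by rw [map_sum]
    -- extract each coordinate
    have key3 : ∀ m₀, ∑ i, (d i m₀ ⊗ₜ[k] (1 : K)) * ρ (a i) = 0 := by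
      intro m₀
      have h1 := congrArg (TensorProduct.map LinearMap.id (auxR (k := k) (e.coord m₀))) key2
      rw [map_zero, map_sum] at h1
      have h2 : ∀ m, TensorProduct.map LinearMap.id (auxR (k := k) (e.coord m₀))
          (TensorProduct.map LinearMap.id ((TensorProduct.mk k K K) (e m))
            (∑ i, (d i m ⊗ₜ[k] (1 : K)) * ρ (a i))) =
          (if m = m₀ then (1 : k) else 0) • ∑ i, (d i m ⊗ₜ[k] (1 : K)) * ρ (a i) := by
        intro m
        rw [auxF]
        congr 1
        rw [Module.Basis.coord_apply, Module.Basis.repr_self, Finsupp.single_apply]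
      rw [Finset.sum_congr rfl fun m _ => h2 m] at h1
      simp only [ite_smul, one_smul, zero_smul] at h1
      rwa [Finset.sum_ite_eq' Finset.univ m₀
        (fun m => ∑ i, (d i m ⊗ₜ[k] (1 : K)) * ρ (a i)), if_pos (Finset.mem_univ m₀)] at h1
    have hd0 : ∀ m₀ i, d i m₀ = 0 := fun m₀ i => congrFun (hindep _ (key3 m₀)) i
    intro i
    have : ρ (c i) - (c i) ⊗ₜ[k] (1 : K) = 0 := by
      rw [hw i]
      exact Finset.sum_eq_zero fun m _ => by rw [hd0 m i, TensorProduct.zero_tmul]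
    linear_combination (norm := module) this
  refine ⟨c, ⟨fun i => hcoinv i, hsum⟩, ?_⟩
  intro c' ⟨hc'inv, hc'sum⟩
  have hρb : ρ b = ∑ i, (c' i ⊗ₜ[k] (1 : K)) * ρ (a i) := by
    rw [hc'sum, map_sum]
    exact Finset.sum_congr rfl fun i _ => by
      rw [map_mul, show ρ (c' i) = c' i ⊗ₜ[k] (1 : K) from hc'inv i]
  have hzero : ∑ i, ((c' i - c i) ⊗ₜ[k] (1 : K)) * ρ (a i) = 0 := by
    have : (∑ i, (c' i ⊗ₜ[k] (1 : K)) * ρ (a i)) - ∑ i, (c i ⊗ₜ[k] (1 : K)) * ρ (a i) = 0 := by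
      rw [← hρb, ← hc, sub_self]
    rw [← this, ← Finset.sum_sub_distrib]
    exact Finset.sum_congr rfl fun i _ => by
      rw [TensorProduct.sub_tmul, sub_mul]
  have := hindep _ hzero
  funext i
  have h := congrFun this i
  simpa [sub_eq_zero] using h
end

section
/- Let H be a finite dimensional Hopf algebra, A an H-prime H-module algebra, and Q = Q_H(A) its H-symmetric Martindale quotient ring. Then Z(Q)^H = Z(Q) ∩ Q^H is a field; moreover, for every H-stable ideal I of Q and every map f : I → Q that is simultaneously a Q-bimodule homomorphism and H-linear, there exists z ∈ Z(Q)^H with f(x) = zx for all x ∈ I. -/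
open TensorProduct

set_option linter.unusedSectionVars false
set_option maxHeartbeats 1000000

variable {k : Type*} [Field k]
variable {H : Type*} [Ring H] [HopfAlgebra k H] [FiniteDimensional k H]
variable {Q : Type*} [Ring Q] [Algebra k Q]

/-- The action of `H` on `A ⊗[k] A` through the comultiplication of `H`. -/
noncomputable def tensorAct (act : H →ₗ[k] Q →ₗ[k] Q) :
    H →ₗ[k] (Q ⊗[k] Q) →ₗ[k] (Q ⊗[k] Q) :=
  (TensorProduct.homTensorHomMap (RingHom.id k) Q Q Q Q).comp
    ((TensorProduct.map act act).comp (Coalgebra.comul (R := k) (A := H)))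

/-- `act` makes the `k`-algebra `A` into a (left) `H`-module algebra: `A` is a left
`H`-module and the multiplication map `A ⊗ A → A` is `H`-linear, `H` acting on the tensor
product via the comultiplication. -/
structure IsModuleAlgebra (act : H →ₗ[k] Q →ₗ[k] Q) : Prop where
  act_one : ∀ a : Q, act 1 a = a
  act_mul : ∀ g h : H, ∀ a : Q, act (g * h) a = act g (act h a)
  smul_one : ∀ h : H, act h 1 = Coalgebra.counit (R := k) h • (1 : Q)
  mul_compat : ∀ h : H,
    (LinearMap.mul' k Q).comp (tensorAct act h) = (act h).comp (LinearMap.mul' k Q)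

section Martindale

variable (act : H →ₗ[k] Q →ₗ[k] Q) (A : Subalgebra k Q)

/-- `I` is a two-sided ideal of the subalgebra `A`, viewed as a `k`-submodule of `Q`. -/
def IsIdealOf (I : Submodule k Q) : Prop :=
  I ≤ Subalgebra.toSubmodule A ∧ ∀ a ∈ A, ∀ x ∈ I, a * x ∈ I ∧ x * a ∈ I

/-- `I` is an `H`-stable submodule. -/
def IsStable (I : Submodule k Q) : Prop := ∀ h : H, ∀ x ∈ I, act h x ∈ I

/-- The `H`-invariant central elements `Z(Q)^H` of `Q`. -/
def centralInvariants : Set Q :=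
  {z : Q | (∀ q : Q, z * q = q * z) ∧ ∀ h : H, act h z = Coalgebra.counit (R := k) h • z}

end Martindale

/-! ### Auxiliary lemmas -/

lemma repr_counit_left (h : H) {ι : Type*} (r : Coalgebra.Repr k h ι) :
    ∑ i ∈ r.index, Coalgebra.counit (R := k) (r.left i) • r.right i = h := by
  have := congrArg (TensorProduct.lid k H) (Coalgebra.sum_counit_tmul_eq r)
  simp only [map_sum, TensorProduct.lid_tmul, one_smul] at this
  exact this

lemma repr_counit_right (h : H) {ι : Type*} (r : Coalgebra.Repr k h ι) :
    ∑ i ∈ r.index, Coalgebra.counit (R := k) (r.right i) • r.left i = h := by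
  have := congrArg (TensorProduct.rid k H) (Coalgebra.sum_tmul_counit_eq r)
  simp only [map_sum, TensorProduct.rid_tmul, one_smul] at this
  exact this

lemma act_mul_repr {act : H →ₗ[k] Q →ₗ[k] Q} (hma : IsModuleAlgebra act)
    {h : H} {ι : Type*} (r : Coalgebra.Repr k h ι) (a b : Q) :
    act h (a * b) = ∑ i ∈ r.index, act (r.left i) a * act (r.right i) b := by
  have h1 := LinearMap.congr_fun (hma.mul_compat h) (a ⊗ₜ[k] b)
  simp only [LinearMap.comp_apply, LinearMap.mul'_apply] at h1
  rw [← h1]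
  unfold tensorAct
  simp only [LinearMap.comp_apply, ← r.eq, map_sum, TensorProduct.map_tmul,
    TensorProduct.homTensorHomMap_apply, LinearMap.sum_apply,
    TensorProduct.map_tmul, LinearMap.mul'_apply]

lemma act_smul_one_mul {act : H →ₗ[k] Q →ₗ[k] Q} (hma : IsModuleAlgebra act)
    (c : k) (y : Q) : act (c • (1 : H)) y = c • y := by
  rw [map_smul, LinearMap.smul_apply, hma.act_one]

/-- If `z` is `H`-invariant, the action commutes with left multiplication by `z`. -/
lemma act_mul_left_inv {act : H →ₗ[k] Q →ₗ[k] Q} (hma : IsModuleAlgebra act)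
    {z : Q} (hz : ∀ h : H, act h z = Coalgebra.counit (R := k) h • z) (w : Q) (h : H) :
    act h (z * w) = z * act h w := by
  classical
  set r := Coalgebra.Repr.arbitrary k h with hrdef
  rw [act_mul_repr hma r z w]
  have : ∀ i ∈ r.index, act (r.left i) z * act (r.right i) w
      = z * (Coalgebra.counit (R := k) (r.left i) • act (r.right i) w) := by
    intro i _
    rw [hz, smul_mul_assoc, mul_smul_comm]
  rw [Finset.sum_congr rfl this, ← Finset.mul_sum]
  congr 1
  conv_rhs => rw [← repr_counit_left h r]
  simp only [map_sum, LinearMap.sum_apply, map_smul, LinearMap.smul_apply]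

/-- Auxiliary trilinear map used in the proof of `invariance_key`. -/
noncomputable def triMap (act : H →ₗ[k] Q →ₗ[k] Q) (q x : Q) : H ⊗[k] (H ⊗[k] H) →ₗ[k] Q :=
  (LinearMap.mul' k Q) ∘ₗ TensorProduct.map (act.flip q)
    (TensorProduct.lift (((LinearMap.llcomp k H Q Q).flip
      ((act.flip x) ∘ₗ (HopfAlgebra.antipode (R := k)))) ∘ₗ act))

lemma triMap_tmul (act : H →ₗ[k] Q →ₗ[k] Q) (q x : Q) (u v w : H) :
    triMap act q x (u ⊗ₜ[k] (v ⊗ₜ[k] w)) =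
      act u q * act v (act (HopfAlgebra.antipode (R := k) w) x) := by
  simp [triMap]

/-- Key lemma: if left multiplication by `q` commutes with the `H`-action on multiples of `x`,
then `act h q * x = ε(h) • (q * x)`. -/
lemma invariance_key {act : H →ₗ[k] Q →ₗ[k] Q} (hma : IsModuleAlgebra act) (q x : Q)
    (Hq : ∀ h : H, q * act h x = act h (q * x)) (h : H) :
    act h q * x = Coalgebra.counit (R := k) h • (q * x) := by
  classical
  set r := Coalgebra.Repr.arbitrary k h with hrdef
  set s : (i : H × H) → Coalgebra.Repr k (r.left i) (H × H) :=
    fun i => Coalgebra.Repr.arbitrary k (r.left i) with hsdef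
  set t : (i : H × H) → Coalgebra.Repr k (r.right i) (H × H) :=
    fun i => Coalgebra.Repr.arbitrary k (r.right i) with htdef
  have step1 : act h q * x = ∑ i ∈ r.index,
      act (r.left i) q * ((Coalgebra.counit (R := k) (r.right i)) • x) := by
    conv_lhs => rw [← repr_counit_right h r]
    simp only [map_sum, LinearMap.sum_apply, map_smul, LinearMap.smul_apply, Finset.sum_mul,
      smul_mul_assoc, mul_smul_comm]
  have step2 : ∀ i, (Coalgebra.counit (R := k) (r.right i)) • x =
      ∑ j ∈ (t i).index, act ((t i).left j)
        (act (HopfAlgebra.antipode (R := k) ((t i).right j)) x) := by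
    intro i
    have h1 := HopfAlgebra.sum_mul_antipode_eq_smul (R := k) (t i)
    calc (Coalgebra.counit (R := k) (r.right i)) • x
        = act ((Coalgebra.counit (R := k) (r.right i)) • (1 : H)) x := by
          rw [act_smul_one_mul hma]
      _ = act (∑ j ∈ (t i).index, (t i).left j *
            HopfAlgebra.antipode (R := k) ((t i).right j)) x := by rw [h1]
      _ = ∑ j ∈ (t i).index, act ((t i).left j)
            (act (HopfAlgebra.antipode (R := k) ((t i).right j)) x) := by
          rw [map_sum, LinearMap.sum_apply]
          exact Finset.sum_congr rfl fun j _ => hma.act_mul _ _ _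
  have coas := Coalgebra.sum_tmul_tmul_eq r s t
  have key : (∑ i ∈ r.index, ∑ j ∈ (t i).index,
        act (r.left i) q * act ((t i).left j)
          (act (HopfAlgebra.antipode (R := k) ((t i).right j)) x))
      = ∑ i ∈ r.index, ∑ j ∈ (s i).index,
        act ((s i).left j) q * act ((s i).right j)
          (act (HopfAlgebra.antipode (R := k) (r.right i)) x) := by
    have := congrArg (triMap act q x) coas
    simp only [map_sum, triMap_tmul] at this
    exact this.symm
  have step4 : ∀ i ∈ r.index, (∑ j ∈ (s i).index,
        act ((s i).left j) q * act ((s i).right j)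
          (act (HopfAlgebra.antipode (R := k) (r.right i)) x))
      = act (r.left i * HopfAlgebra.antipode (R := k) (r.right i)) (q * x) := by
    intro i _
    rw [← act_mul_repr hma (s i) q (act (HopfAlgebra.antipode (R := k) (r.right i)) x),
      Hq, ← hma.act_mul]
  calc act h q * x
      = ∑ i ∈ r.index, act (r.left i) q * ((Coalgebra.counit (R := k) (r.right i)) • x) := step1
    _ = ∑ i ∈ r.index, ∑ j ∈ (t i).index,
        act (r.left i) q * act ((t i).left j)
          (act (HopfAlgebra.antipode (R := k) ((t i).right j)) x) := by
        refine Finset.sum_congr rfl fun i _ => ?_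
        rw [step2 i, Finset.mul_sum]
    _ = ∑ i ∈ r.index, act (r.left i * HopfAlgebra.antipode (R := k) (r.right i)) (q * x) := by
        rw [key]; exact Finset.sum_congr rfl step4
    _ = act (∑ i ∈ r.index, r.left i * HopfAlgebra.antipode (R := k) (r.right i)) (q * x) := by
        rw [map_sum, LinearMap.sum_apply]
    _ = Coalgebra.counit (R := k) h • (q * x) := by
        rw [HopfAlgebra.sum_mul_antipode_eq_smul (R := k) r, act_smul_one_mul hma]

/-- Given an injective `k`-linear map `z * ·`, there is a globally defined `k`-linear map
sending `z * x` back to `x` for `x` in a given submodule. -/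
lemma exists_left_section (z : Q) (hreg : Function.Injective (LinearMap.mulLeft k z))
    (K : Submodule k Q) : ∃ g : Q →ₗ[k] Q, ∀ x ∈ K, g (z * x) = x := by
  set J : Submodule k Q := K.map (LinearMap.mulLeft k z) with hJ
  obtain ⟨p, hp⟩ := Submodule.exists_isCompl J
  set e := Submodule.equivMapOfInjective (LinearMap.mulLeft k z) hreg K with he
  refine ⟨K.subtype ∘ₗ (e.symm : J →ₗ[k] K) ∘ₗ (J.linearProjOfIsCompl p hp), ?_⟩
  intro x hx
  have hmem : z * x ∈ J := ⟨x, hx, rfl⟩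
  have hproj : (J.linearProjOfIsCompl p hp) (z * x) = ⟨z * x, hmem⟩ :=
    Submodule.linearProjOfIsCompl_apply_left hp ⟨z * x, hmem⟩
  simp only [LinearMap.comp_apply, hproj]
  have : e ⟨x, hx⟩ = ⟨z * x, hmem⟩ := by
    apply Subtype.ext
    rw [he, Submodule.coe_equivMapOfInjective_apply, LinearMap.mulLeft_apply]
  rw [← this]
  simp

/-- let `H` be a finite dimensional Hopf algebra, `A` an `H`-prime
`H`-module algebra and `Q = Q_H(A)` its `H`-symmetric Martindale quotient ring; here `Q`
is an `H`-module algebra containing `A` as an `H`-stable subalgebra, axiomatized by the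
characteristic properties (2)–(4) of the `H`-symmetric quotient ring.  Then
`Z(Q)^H = Z(Q) ∩ Q^H` is a field, and for every `H`-stable two-sided ideal `I` of `Q`
and every `Q`-bimodule homomorphism `f : I → Q` which is also `H`-linear there is
`z ∈ Z(Q)^H` with `f(x) = zx` for all `x ∈ I`. -/
theorem martindale_central_invariants_field
    [Nontrivial Q]
    (act : H →ₗ[k] Q →ₗ[k] Q) (hma : IsModuleAlgebra act)
    (A : Subalgebra k Q)
    (hAstab : ∀ h : H, ∀ a ∈ A, act h a ∈ A)
    -- `A` is `H`-prime
    (hprime : ∀ I J : Submodule k Q,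
      IsIdealOf A I → IsStable act I → I ≠ ⊥ →
      IsIdealOf A J → IsStable act J → J ≠ ⊥ →
      ∃ x ∈ I, ∃ y ∈ J, x * y ≠ 0)
    -- (2) nonzero `H`-stable ideals of `A` have zero left and right annihilators in `Q`
    (hann : ∀ I : Submodule k Q, IsIdealOf A I → IsStable act I → I ≠ ⊥ → ∀ q : Q,
      ((∀ x ∈ I, q * x = 0) → q = 0) ∧ ((∀ x ∈ I, x * q = 0) → q = 0))
    -- (3) every element of `Q` is brought back into `A` by some nonzero stable ideal
    (hloc : ∀ q : Q, ∃ I : Submodule k Q, IsIdealOf A I ∧ IsStable act I ∧ I ≠ ⊥ ∧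
      ∀ x ∈ I, x * q ∈ A ∧ q * x ∈ A)
    -- (4) compatible pairs of one-sided `A`-linear maps `I → A` are realized in `Q`
    (hreal : ∀ I : Submodule k Q, IsIdealOf A I → IsStable act I → I ≠ ⊥ →
      ∀ fl fr : Q →ₗ[k] Q,
      (∀ x ∈ I, fl x ∈ A ∧ fr x ∈ A) →
      (∀ a ∈ A, ∀ x ∈ I, fl (a * x) = a * fl x) →
      (∀ a ∈ A, ∀ x ∈ I, fr (x * a) = fr x * a) →
      (∀ x ∈ I, ∀ y ∈ I, x * fr y = fl x * y) →
      ∃ q : Q, ∀ x ∈ I, fl x = x * q ∧ fr x = q * x) :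
    -- `Z(Q)^H` is a field
    (∀ z ∈ centralInvariants act, z ≠ 0 →
      ∃ w ∈ centralInvariants act, z * w = 1 ∧ w * z = 1) ∧
    -- equivariant bimodule endomorphisms of stable ideals of `Q` are central scalars
    (∀ I : Submodule k Q, (∀ q : Q, ∀ x ∈ I, q * x ∈ I ∧ x * q ∈ I) → IsStable act I →
      ∀ f : Q →ₗ[k] Q,
      (∀ q : Q, ∀ x ∈ I, f (q * x) = q * f x ∧ f (x * q) = f x * q) →
      (∀ h : H, ∀ x ∈ I, f (act h x) = act h (f x)) →
      ∃ z ∈ centralInvariants act, ∀ x ∈ I, f x = z * x) := by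
  constructor
  · -- Part 1 : `Z(Q)^H` is a field
    rintro z ⟨hzc, hzi⟩ hz0
    obtain ⟨K, hKideal, hKstab, hKne, hKz⟩ := hloc z
    set J : Submodule k Q := K.map (LinearMap.mulLeft k z) with hJdef
    have hJmem : ∀ x ∈ K, z * x ∈ J := fun x hx => ⟨x, hx, rfl⟩
    have hJle : J ≤ Subalgebra.toSubmodule A := by
      rintro _ ⟨x, hx, rfl⟩
      exact (Subalgebra.mem_toSubmodule A).mpr (hKz x hx).2
    have hJideal : IsIdealOf A J := by
      refine ⟨hJle, ?_⟩
      rintro a ha _ ⟨x, hx, rfl⟩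
      simp only [LinearMap.mulLeft_apply]
      constructor
      · refine ⟨a * x, (hKideal.2 a ha x hx).1, ?_⟩
        simp only [LinearMap.mulLeft_apply]
        rw [← mul_assoc, hzc a, mul_assoc]
      · exact ⟨x * a, (hKideal.2 a ha x hx).2, by simp [LinearMap.mulLeft_apply, mul_assoc]⟩
    have hJstab : IsStable act J := by
      rintro h _ ⟨x, hx, rfl⟩
      simp only [LinearMap.mulLeft_apply]
      rw [act_mul_left_inv hma hzi x h]
      exact hJmem _ (hKstab h x hx)
    have hJne : J ≠ ⊥ := by
      intro hbot
      apply hz0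
      refine (hann K hKideal hKstab hKne z).1 ?_
      intro x hx
      have := hJmem x hx
      rw [hbot, Submodule.mem_bot] at this
      exact this
    -- `z` is regular in `Q`
    have hreg : Function.Injective (LinearMap.mulLeft k z) := by
      rw [injective_iff_map_eq_zero]
      intro c hc
      simp only [LinearMap.mulLeft_apply] at hc
      refine (hann J hJideal hJstab hJne c).1 ?_
      rintro _ ⟨x, hx, rfl⟩
      simp only [LinearMap.mulLeft_apply]
      rw [← mul_assoc, ← hzc c, hc, zero_mul]
    obtain ⟨g, hg⟩ := exists_left_section z hreg K
    have hKA : ∀ x ∈ K, x ∈ A := fun x hx => (Subalgebra.mem_toSubmodule A).mp (hKideal.1 hx)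
    obtain ⟨w, hw⟩ := hreal J hJideal hJstab hJne g g
      (by rintro _ ⟨x, hx, rfl⟩
          simp only [LinearMap.mulLeft_apply]
          rw [hg x hx]
          exact ⟨hKA x hx, hKA x hx⟩)
      (by rintro a ha _ ⟨x, hx, rfl⟩
          simp only [LinearMap.mulLeft_apply]
          rw [← mul_assoc, ← hzc a, mul_assoc, hg x hx, hg (a * x) (hKideal.2 a ha x hx).1])
      (by rintro a ha _ ⟨x, hx, rfl⟩
          simp only [LinearMap.mulLeft_apply]
          rw [mul_assoc, hg x hx, hg (x * a) (hKideal.2 a ha x hx).2])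
      (by rintro _ ⟨x, hx, rfl⟩ _ ⟨y, hy, rfl⟩
          simp only [LinearMap.mulLeft_apply]
          rw [hg x hx, hg y hy, ← mul_assoc, ← hzc x, mul_assoc])
    have hw' : ∀ x ∈ K, x = (z * x) * w ∧ x = w * (z * x) := by
      intro x hx
      have := hw (z * x) (hJmem x hx)
      rw [hg x hx] at this
      exact ⟨this.1, this.2⟩
    have hzw : z * w = 1 := by
      rw [← sub_eq_zero]
      refine (hann K hKideal hKstab hKne _).2 ?_
      intro x hx
      rw [mul_sub, mul_one, ← mul_assoc, ← hzc x, ← (hw' x hx).1, sub_self]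
    have hwz : w * z = 1 := by
      rw [← sub_eq_zero]
      refine (hann K hKideal hKstab hKne _).1 ?_
      intro x hx
      rw [sub_mul, one_mul, mul_assoc, ← (hw' x hx).2, sub_self]
    have hwc : ∀ r : Q, w * r = r * w := by
      intro r
      calc w * r = w * (r * (z * w)) := by rw [hzw, mul_one]
        _ = w * (z * (r * w)) := by rw [← mul_assoc r z, ← hzc r, mul_assoc]
        _ = (w * z) * (r * w) := by rw [mul_assoc]
        _ = r * w := by rw [hwz, one_mul]
    have hwinv : ∀ h : H, act h w = Coalgebra.counit (R := k) h • w := by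
      intro h
      apply hreg
      simp only [LinearMap.mulLeft_apply]
      rw [← act_mul_left_inv hma hzi w h, hzw, hma.smul_one, mul_smul_comm, hzw]
    exact ⟨w, ⟨hwc, hwinv⟩, hzw, hwz⟩
  · -- Part 2 : equivariant bimodule maps are central scalars
    intro I hI hIstab f hf1 hf2
    by_cases hIbot : I = ⊥
    · refine ⟨0, ⟨fun q => by simp, fun h => by simp⟩, ?_⟩
      intro x hx
      rw [hIbot, Submodule.mem_bot] at hx
      subst hx
      simp
    · obtain ⟨u, huI, hu0⟩ := Submodule.ne_bot_iff I |>.mp hIbot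
      obtain ⟨K, hK1, hK2, hK3, hK4⟩ := hloc u
      obtain ⟨K', hK'1, hK'2, hK'3, hK'4⟩ := hloc (f u)
      set M : Submodule k Q := K ⊓ K' with hMdef
      have hMA : ∀ x ∈ M, x ∈ A := fun x hx =>
        (Subalgebra.mem_toSubmodule A).mp (hK1.1 hx.1)
      have hMideal : IsIdealOf A M := by
        refine ⟨fun x hx => hK1.1 hx.1, ?_⟩
        intro a ha x hx
        exact ⟨⟨(hK1.2 a ha x hx.1).1, (hK'1.2 a ha x hx.2).1⟩,
          ⟨(hK1.2 a ha x hx.1).2, (hK'1.2 a ha x hx.2).2⟩⟩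
      have hMstab : IsStable act M := fun h x hx => ⟨hK2 h x hx.1, hK'2 h x hx.2⟩
      have hMne : M ≠ ⊥ := by
        obtain ⟨x, hx, y, hy, hxy⟩ := hprime K K' hK1 hK2 hK3 hK'1 hK'2 hK'3
        have hyA : y ∈ A := (Subalgebra.mem_toSubmodule A).mp (hK'1.1 hy)
        have hxA : x ∈ A := (Subalgebra.mem_toSubmodule A).mp (hK1.1 hx)
        exact (Submodule.ne_bot_iff M).mpr
          ⟨x * y, ⟨(hK1.2 y hyA x hx).2, (hK'1.2 x hxA y hy).1⟩, hxy⟩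
      set T : Submodule k Q := (I ⊓ Subalgebra.toSubmodule A) ⊓
        Submodule.comap f (Subalgebra.toSubmodule A) with hTdef
      have hTmem : ∀ t : Q, t ∈ T ↔ t ∈ I ∧ t ∈ A ∧ f t ∈ A := by
        intro t
        simp [hTdef, Submodule.mem_inf, Submodule.mem_comap, and_assoc]
      have hTideal : IsIdealOf A T := by
        constructor
        · intro t ht
          exact (Subalgebra.mem_toSubmodule A).mpr ((hTmem t).mp ht).2.1
        · intro a ha t ht
          obtain ⟨htI, htA, htf⟩ := (hTmem t).mp ht
          constructor
          · refine (hTmem _).mpr ⟨(hI a t htI).1, mul_mem ha htA, ?_⟩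
            rw [(hf1 a t htI).1]
            exact mul_mem ha htf
          · refine (hTmem _).mpr ⟨(hI a t htI).2, mul_mem htA ha, ?_⟩
            rw [(hf1 a t htI).2]
            exact mul_mem htf ha
      have hTstab : IsStable act T := by
        intro h t ht
        obtain ⟨htI, htA, htf⟩ := (hTmem t).mp ht
        refine (hTmem _).mpr ⟨hIstab h t htI, hAstab h t htA, ?_⟩
        rw [hf2 h t htI]
        exact hAstab h _ htf
      have hTne : T ≠ ⊥ := by
        have hex : ∃ x ∈ M, ∃ y ∈ M, x * u * y ≠ 0 := by
          by_contra hcon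
          push_neg at hcon
          apply hu0
          refine (hann M hMideal hMstab hMne u).2 ?_
          intro x hx
          exact (hann M hMideal hMstab hMne (x * u)).1 (fun y hy => hcon x hx y hy)
        obtain ⟨x, hx, y, hy, hne⟩ := hex
        refine (Submodule.ne_bot_iff T).mpr ⟨x * u * y, (hTmem _).mpr ⟨?_, ?_, ?_⟩, hne⟩
        · exact (hI y (x * u) (hI x u huI).1).2
        · exact mul_mem (hK4 x hx.1).1 (hMA y hy)
        · rw [(hf1 y (x * u) (hI x u huI).1).2, (hf1 x u huI).1, mul_assoc]
          exact mul_mem ((Subalgebra.mem_toSubmodule A).mp (hK1.1 hx.1)) (hK'4 y hy.2).2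
      obtain ⟨q, hq⟩ := hreal T hTideal hTstab hTne f f
        (fun x hx => ⟨((hTmem x).mp hx).2.2, ((hTmem x).mp hx).2.2⟩)
        (fun a _ x hx => (hf1 a x ((hTmem x).mp hx).1).1)
        (fun a _ x hx => (hf1 a x ((hTmem x).mp hx).1).2)
        (fun x hx y hy => by
          rw [← (hf1 x y ((hTmem y).mp hy).1).1, (hf1 y x ((hTmem x).mp hx).1).2])
      have hannT := hann T hTideal hTstab hTne
      have ha : ∀ y ∈ I, f y = q * y := by
        intro y hy
        rw [← sub_eq_zero]
        refine (hannT (f y - q * y)).2 ?_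
        intro x hx
        have hxI : x ∈ I := ((hTmem x).mp hx).1
        rw [mul_sub, ← (hf1 x y hy).1, (hf1 y x hxI).2, (hq x hx).1, mul_assoc, sub_self]
      have hb : ∀ y ∈ I, f y = y * q := by
        intro y hy
        rw [← sub_eq_zero]
        refine (hannT (f y - y * q)).1 ?_
        intro x hx
        have hxI : x ∈ I := ((hTmem x).mp hx).1
        rw [sub_mul, ← (hf1 x y hy).2, (hf1 y x hxI).1, (hq x hx).2, ← mul_assoc, sub_self]
      have hqc : ∀ r : Q, q * r = r * q := by
        intro r
        rw [← sub_eq_zero]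
        refine (hannT (q * r - r * q)).1 ?_
        intro x hx
        have hxI : x ∈ I := ((hTmem x).mp hx).1
        have hrx : r * x ∈ I := (hI r x hxI).1
        rw [sub_mul, mul_assoc, mul_assoc, ← ha (r * x) hrx, (hf1 r x hxI).1,
          (hq x hx).2, sub_self]
      have hqi : ∀ h : H, act h q = Coalgebra.counit (R := k) h • q := by
        intro h
        rw [← sub_eq_zero]
        refine (hannT (act h q - Coalgebra.counit (R := k) h • q)).1 ?_
        intro x hx
        have hxI : x ∈ I := ((hTmem x).mp hx).1
        have Hqx : ∀ h' : H, q * act h' x = act h' (q * x) := by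
          intro h'
          rw [← ha _ (hIstab h' x hxI), hf2 h' x hxI, ha x hxI]
        rw [sub_mul, invariance_key hma q x Hqx h, smul_mul_assoc, sub_self]
      exact ⟨q, ⟨hqc, hqi⟩, ha⟩
end
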